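/- Let α := Σ_{k=1}^m k² r̃_k. Then for every T > 0 and every X ∈ ℝ, lim_{ε → 0⁺} ε^{−1} p_{ε^{−2} T}( ⌊ε^{−1} X⌋ ) = (2π α T)^{−1/2} exp( −X² / (2 α T) ), where ⌊·⌋ denotes the integer floor. -/

import Mathlib

/-!
Substituting `θ = ε u` turns `ε⁻¹ p_{ε⁻²T}(⌊ε⁻¹X⌋)` into
`(2π)⁻¹ ∫_{|u| ≤ π/ε} e^{-i ε⌊ε⁻¹X⌋ u} e^{-ε⁻² T φ(ε u)} du`.
Since `φ(θ) = (α/2) θ² + O(θ⁴)`, the integrand tends to `e^{-iXu} e^{-αT u²/2}`, and Jordan's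
inequality `1 - cos θ ≥ 2θ²/π²` on `[-π, π]` dominates it by the Gaussian `e^{-(2 r̃₁/π²) T u²}`.
Dominated convergence and the Fourier transform of the Gaussian give the limit.
-/

open Finset

/-- `φ(θ) := Σ_{k=1}^m r̃_k (1 − cos(kθ))`. -/
noncomputable def phiFn (m : ℕ) (r : ℕ → ℝ) (θ : ℝ) : ℝ :=
  ∑ k ∈ Finset.Icc 1 m, r k * (1 - Real.cos (k * θ))

/-- The semi-discrete heat kernel
`p_t(x) := (2π)⁻¹ ∫_{−π}^{π} e^{−ixθ} e^{−tφ(θ)} dθ`, a real number since `φ` is even. -/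
noncomputable def hk (m : ℕ) (r : ℕ → ℝ) (t : ℝ) (x : ℤ) : ℝ :=
  ((2 * (Real.pi : ℂ))⁻¹ * ∫ θ in (-Real.pi)..Real.pi,
      Complex.exp (-(x : ℂ) * Complex.I * (θ : ℂ)) *
        Complex.exp (-(t : ℂ) * ((phiFn m r θ : ℝ) : ℂ))).re

open Filter MeasureTheory Complex Asymptotics
open scoped Topology Real

lemma Real.isBigO_cos_sub_one_add_sq_div_two :
    (fun x : ℝ => Real.cos x - (1 - x ^ 2 / 2)) =O[𝓝 0] fun x => x ^ 4 := by
  refine IsBigO.of_bound (5 / 96) ?_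
  filter_upwards [Metric.closedBall_mem_nhds (0 : ℝ) one_pos] with x hx
  rw [mem_closedBall_zero_iff] at hx
  simpa [mul_comm] using Real.cos_bound hx

lemma inv_smul_intervalIntegral_eq_integral_indicator {E : Type*} [NormedAddCommGroup E]
    [NormedSpace ℝ E] (f : ℝ → E) {L ε : ℝ} (hL : 0 ≤ L) (hε : 0 < ε) :
    ε⁻¹ • ∫ θ in -L..L, f θ =
      ∫ u, (Set.Ioc (-(L / ε)) (L / ε)).indicator (fun u => f (ε * u)) u := by
  rw [integral_indicator measurableSet_Ioc, ← intervalIntegral.integral_of_le (by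
      have := div_nonneg hL hε.le; linarith), intervalIntegral.integral_comp_mul_left _ hε.ne',
    mul_neg, mul_div_cancel₀ _ hε.ne']

section Rescaling

variable {ψ : ℝ → ℝ} {x : ℝ → ℝ} {β c L T X : ℝ}

lemma tendsto_inv_sq_mul_comp_mul
    (hψ : (fun θ => ψ θ - β * θ ^ 2) =o[𝓝 0] fun θ => θ ^ 2) (u : ℝ) :
    Tendsto (fun ε => (ε ^ 2)⁻¹ * ψ (ε * u)) (𝓝[≠] 0) (𝓝 (β * u ^ 2)) := by
  have hεu : Tendsto (fun ε : ℝ => ε * u) (𝓝[≠] 0) (𝓝 0) := by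
    simpa using ((continuous_mul_const u).tendsto 0).mono_left nhdsWithin_le_nhds
  have hrem : (fun ε : ℝ => ψ (ε * u) - β * (ε * u) ^ 2) =o[𝓝[≠] 0] fun ε => ε ^ 2 :=
    (hψ.comp_tendsto hεu).trans_isBigO
      (((isBigO_refl _ _).const_mul_left (u ^ 2)).congr_left fun ε => by
        simp only [Function.comp_apply]; ring)
  refine (hrem.tendsto_div_nhds_zero.const_add (β * u ^ 2)).congr' ?_ |>.trans (by simp)
  filter_upwards [self_mem_nhdsWithin] with ε (hε : ε ≠ 0)
  field_simp
  ring

lemma eventually_mem_Ioc_neg_div_div (hL : 0 < L) (u : ℝ) :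
    ∀ᶠ ε in 𝓝[>] 0, u ∈ Set.Ioc (-(L / ε)) (L / ε) := by
  have h0 : Tendsto (fun ε : ℝ => ε * |u|) (𝓝[>] 0) (𝓝 0) := by
    simpa using ((continuous_mul_const |u|).tendsto 0).mono_left nhdsWithin_le_nhds
  filter_upwards [h0.eventually_lt_const hL, self_mem_nhdsWithin] with ε hεu (hε : 0 < ε)
  have hu : |u| < L / ε := by rwa [lt_div_iff₀' hε]
  exact ⟨(abs_lt.1 hu).1, (abs_lt.1 hu).2.le⟩

lemma norm_cexp_mul_cexp_comp_mul_le (hlow : ∀ θ, |θ| ≤ L → c * θ ^ 2 ≤ ψ θ) (hT : 0 ≤ T)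
    (y : ℝ) {ε u : ℝ} (hε : ε ≠ 0) (hεu : |ε * u| ≤ L) :
    ‖cexp (-(y : ℂ) * I * ((ε * u : ℝ) : ℂ)) * cexp (-(((ε ^ 2)⁻¹ * T : ℝ) : ℂ) * ψ (ε * u))‖
      ≤ Real.exp (-(c * T) * u ^ 2) := by
  rw [norm_mul, Complex.norm_exp, Complex.norm_exp, ← Real.exp_add, Real.exp_le_exp]
  simp only [neg_mul, neg_re, mul_re, ofReal_re, I_re, ofReal_im, I_im, mul_zero, mul_one,
    sub_zero, zero_mul, neg_zero, zero_add, neg_le_neg_iff]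
  calc c * T * u ^ 2 = (ε ^ 2)⁻¹ * T * (c * (ε * u) ^ 2) := by field_simp
    _ ≤ (ε ^ 2)⁻¹ * T * ψ (ε * u) := by gcongr; exact hlow _ hεu

lemma tendsto_cexp_mul_cexp_comp_mul
    (hquad : (fun θ => ψ θ - β * θ ^ 2) =o[𝓝 0] fun θ => θ ^ 2)
    (hx : Tendsto (fun ε => ε * x ε) (𝓝[>] 0) (𝓝 X)) (u : ℝ) :
    Tendsto (fun ε : ℝ =>
        cexp (-(x ε : ℂ) * I * ((ε * u : ℝ) : ℂ)) * cexp (-(((ε ^ 2)⁻¹ * T : ℝ) : ℂ) * ψ (ε * u)))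
      (𝓝[>] 0) (𝓝 (cexp (I * (-X : ℂ) * u) * cexp (-((β * T : ℝ) : ℂ) * u ^ 2))) := by
  have hphase : Tendsto (fun ε => cexp (-((ε * x ε : ℝ) : ℂ) * I * u)) (𝓝[>] 0)
      (𝓝 (cexp (I * (-X : ℂ) * u))) := by
    have := (((continuous_ofReal.tendsto X).comp hx).neg.mul_const I).mul_const (u : ℂ) |>.cexp
    simpa only [neg_mul, mul_comm I, Function.comp_def] using this
  have hscaled : Tendsto (fun ε => (ε ^ 2)⁻¹ * T * ψ (ε * u)) (𝓝[>] 0) (𝓝 (β * T * u ^ 2)) := by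
    convert ((tendsto_inv_sq_mul_comp_mul hquad u).mono_left (nhdsGT_le_nhdsNE 0)).const_mul T
      using 2 <;> ring
  have hamp : Tendsto (fun ε => cexp (-((((ε ^ 2)⁻¹ * T * ψ (ε * u)) : ℝ) : ℂ))) (𝓝[>] 0)
      (𝓝 (cexp (-((β * T : ℝ) : ℂ) * u ^ 2))) := by
    simpa only [Function.comp_def, ofReal_mul, ofReal_pow, neg_mul] using
      ((continuous_ofReal.tendsto _).comp hscaled).neg.cexp
  refine (hphase.mul hamp).congr fun ε => ?_
  push_cast
  ring_nf

theorem tendsto_inv_smul_integral_cexp_mul_cexp (hψ : Continuous ψ) (hL : 0 < L) (hc : 0 < c)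
    (hT : 0 < T) (hlow : ∀ θ, |θ| ≤ L → c * θ ^ 2 ≤ ψ θ)
    (hquad : (fun θ => ψ θ - β * θ ^ 2) =o[𝓝 0] fun θ => θ ^ 2)
    (hx : Tendsto (fun ε => ε * x ε) (𝓝[>] 0) (𝓝 X)) :
    Tendsto (fun ε : ℝ => ε⁻¹ • ∫ θ in -L..L,
        cexp (-(x ε : ℂ) * I * θ) * cexp (-(((ε ^ 2)⁻¹ * T : ℝ) : ℂ) * ψ θ))
      (𝓝[>] 0) (𝓝 (∫ u : ℝ, cexp (I * (-X : ℂ) * u) * cexp (-((β * T : ℝ) : ℂ) * u ^ 2))) := by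
  set F : ℝ → ℝ → ℂ := fun ε θ =>
    cexp (-(x ε : ℂ) * I * θ) * cexp (-(((ε ^ 2)⁻¹ * T : ℝ) : ℂ) * ψ θ)
  set G : ℝ → ℝ → ℂ := fun ε => (Set.Ioc (-(L / ε)) (L / ε)).indicator fun u => F ε (ε * u)
  have hFG : (fun ε => ∫ u, G ε u) =ᶠ[𝓝[>] 0] fun ε => ε⁻¹ • ∫ θ in -L..L, F ε θ := by
    filter_upwards [self_mem_nhdsWithin] with ε (hε : 0 < ε)
    exact (inv_smul_intervalIntegral_eq_integral_indicator _ hL.le hε).symm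
  refine Tendsto.congr' hFG (tendsto_integral_filter_of_dominated_convergence
    (fun u => Real.exp (-(c * T) * u ^ 2)) ?_ ?_ (integrable_exp_neg_mul_sq (by positivity)) ?_)
  · refine Eventually.of_forall fun ε => (Continuous.aestronglyMeasurable ?_).indicator
      measurableSet_Ioc
    fun_prop
  · filter_upwards [self_mem_nhdsWithin] with ε (hε : 0 < ε)
    refine ae_of_all _ fun u => ?_
    by_cases hu : u ∈ Set.Ioc (-(L / ε)) (L / ε)
    · have hεu : |ε * u| ≤ L := by
        rw [abs_mul, abs_of_pos hε, ← le_div_iff₀' hε]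
        exact abs_le.2 ⟨hu.1.le, hu.2⟩
      rw [show G ε u = F ε (ε * u) from Set.indicator_of_mem hu _]
      exact norm_cexp_mul_cexp_comp_mul_le hlow hT.le _ hε.ne' hεu
    · rw [show G ε u = (0 : ℂ) from Set.indicator_of_notMem hu _, norm_zero]
      positivity
  · refine ae_of_all _ fun u => (tendsto_cexp_mul_cexp_comp_mul hquad hx u).congr' ?_
    filter_upwards [eventually_mem_Ioc_neg_div_div hL u] with ε hu
    exact (Set.indicator_of_mem hu (fun u => F ε (ε * u))).symm

end Rescaling

lemma re_inv_two_pi_mul_integral_gaussian {a : ℝ} (ha : 0 < a) (X : ℝ) :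
    ((2 * (π : ℂ))⁻¹ * ∫ u : ℝ, cexp (I * (-X : ℂ) * u) * cexp (-(a : ℂ) * u ^ 2)).re
      = (4 * π * a) ^ (-(1 / 2) : ℝ) * Real.exp (-X ^ 2 / (4 * a)) := by
  have hcoef : (2 * π)⁻¹ * (π / a) ^ (1 / 2 : ℝ) = (4 * π * a) ^ (-(1 / 2) : ℝ) := by
    have h2π : ((2 * π) ^ 2) ^ (-(1 / 2) : ℝ) = (2 * π)⁻¹ := by
      rw [Real.rpow_neg (by positivity), ← Real.sqrt_eq_rpow, Real.sqrt_sq (by positivity)]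
    have hπa : (a / π) ^ (-(1 / 2) : ℝ) = (π / a) ^ (1 / 2 : ℝ) := by
      rw [Real.rpow_neg (by positivity), ← Real.inv_rpow (by positivity), inv_div]
    rw [← h2π, ← hπa, ← Real.mul_rpow (by positivity) (by positivity)]
    congr 1
    field_simp
    ring
  have hsqrt : ((π : ℂ) / a) ^ (1 / 2 : ℂ) = (((π / a) ^ (1 / 2 : ℝ) : ℝ) : ℂ) := by
    rw [ofReal_cpow (by positivity)]
    push_cast
    ring
  have hexp : cexp (-(-(X : ℂ)) ^ 2 / (4 * a)) = ((Real.exp (-X ^ 2 / (4 * a)) : ℝ) : ℂ) := by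
    rw [ofReal_exp]
    push_cast
    ring_nf
  rw [fourierIntegral_gaussian (by simpa using ha), hsqrt, hexp, ← hcoef,
    show (2 * (π : ℂ))⁻¹ = (((2 * π)⁻¹ : ℝ) : ℂ) by push_cast; ring,
    ← ofReal_mul, ← ofReal_mul, ofReal_re, mul_assoc]

lemma tendsto_mul_floor_inv_mul (X : ℝ) :
    Tendsto (fun ε : ℝ => ε * ⌊ε⁻¹ * X⌋) (𝓝[>] 0) (𝓝 X) := by
  have hlow : Tendsto (fun ε : ℝ => X - ε) (𝓝[>] 0) (𝓝 X) := by
    simpa using ((continuous_sub_left X).tendsto 0).mono_left nhdsWithin_le_nhds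
  refine tendsto_of_tendsto_of_tendsto_of_le_of_le' hlow tendsto_const_nhds ?_ ?_ <;>
    filter_upwards [self_mem_nhdsWithin] with ε (hε : 0 < ε)
  · have := mul_le_mul_of_nonneg_left (Int.sub_one_lt_floor (ε⁻¹ * X)).le hε.le
    rwa [mul_sub, ← mul_assoc, mul_inv_cancel₀ hε.ne', one_mul, mul_one] at this
  · have := mul_le_mul_of_nonneg_left (Int.floor_le (ε⁻¹ * X)) hε.le
    rwa [← mul_assoc, mul_inv_cancel₀ hε.ne', one_mul] at this

lemma phiFn_sub_sq_isBigO (m : ℕ) (r : ℕ → ℝ) :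
    (fun θ => phiFn m r θ - (∑ k ∈ Icc 1 m, (k : ℝ) ^ 2 * r k) / 2 * θ ^ 2) =O[𝓝 0]
      fun θ => θ ^ 4 := by
  have hterm (k : ℕ) : (fun θ : ℝ => r k * (Real.cos (k * θ) - (1 - (k * θ) ^ 2 / 2))) =O[𝓝 0]
      fun θ => θ ^ 4 := by
    have hk : Tendsto (fun θ : ℝ => (k : ℝ) * θ) (𝓝 0) (𝓝 0) := by
      simpa using (continuous_const_mul (k : ℝ)).tendsto 0
    refine ((Real.isBigO_cos_sub_one_add_sq_div_two.comp_tendsto hk).trans ?_).const_mul_left _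
    exact ((isBigO_refl _ _).const_mul_left ((k : ℝ) ^ 4)).congr_left fun θ => by
      simp only [Function.comp_apply]; ring
  refine (IsBigO.fun_sum (s := Icc 1 m) fun k _ => hterm k).neg_left.congr_left fun θ => ?_
  simp only [phiFn, sum_div, sum_mul, ← sum_sub_distrib, ← sum_neg_distrib]
  exact Finset.sum_congr rfl fun k _ => by ring

lemma mul_sq_le_phiFn {m : ℕ} (hm : 1 ≤ m) {r : ℕ → ℝ} (hr : ∀ k ∈ Icc 1 m, 0 ≤ r k) {θ : ℝ}
    (hθ : |θ| ≤ π) : 2 * r 1 / π ^ 2 * θ ^ 2 ≤ phiFn m r θ := by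
  have h1 : (1 : ℕ) ∈ Icc 1 m := by simp [hm]
  calc 2 * r 1 / π ^ 2 * θ ^ 2 = r 1 * (2 / π ^ 2 * θ ^ 2) := by ring
    _ ≤ r 1 * (1 - Real.cos θ) := by
      gcongr
      · exact hr 1 h1
      · linarith [Real.cos_le_one_sub_mul_cos_sq hθ]
    _ ≤ phiFn m r θ := by
      simpa [phiFn] using Finset.single_le_sum (f := fun k => r k * (1 - Real.cos (k * θ)))
        (fun k hk => mul_nonneg (hr k hk) (sub_nonneg.2 (Real.cos_le_one _))) h1

theorem stmt15 (m : ℕ) (hm : 1 ≤ m) (r : ℕ → ℝ) (hr : ∀ k ∈ Finset.Icc 1 m, 0 < r k) :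
    ∀ T : ℝ, 0 < T → ∀ X : ℝ,
      Filter.Tendsto
        (fun ε : ℝ => ε⁻¹ * hk m r ((ε ^ 2)⁻¹ * T) ⌊ε⁻¹ * X⌋)
        (nhdsWithin 0 (Set.Ioi 0))
        (nhds ((2 * Real.pi * (∑ k ∈ Finset.Icc 1 m, (k : ℝ) ^ 2 * r k) * T) ^ (-(1/2) : ℝ) *
          Real.exp (-X ^ 2 / (2 * (∑ k ∈ Finset.Icc 1 m, (k : ℝ) ^ 2 * r k) * T)))) := by
  intro T hT X
  set α := ∑ k ∈ Icc 1 m, (k : ℝ) ^ 2 * r k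
  have hα : 0 < α := Finset.sum_pos (fun k hk => by
    have := (mem_Icc.1 hk).1; have := hr k hk; positivity) ⟨1, by simp [hm]⟩
  have hlim := tendsto_inv_smul_integral_cexp_mul_cexp (x := fun ε => (⌊ε⁻¹ * X⌋ : ℝ))
    (β := α / 2) (by unfold phiFn; fun_prop) Real.pi_pos
    (by have := hr 1 (by simp [hm]); positivity) hT
    (fun θ hθ => mul_sq_le_phiFn hm (fun k hk => (hr k hk).le) hθ)
    ((phiFn_sub_sq_isBigO m r).trans_isLittleO (isLittleO_pow_pow (by norm_num)))
    (tendsto_mul_floor_inv_mul X)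
  have hre := (continuous_re.tendsto _).comp (hlim.const_mul (2 * (π : ℂ))⁻¹)
  rw [re_inv_two_pi_mul_integral_gaussian (by positivity)] at hre
  convert hre using 2
  · simp only [Function.comp_apply, hk, ofReal_intCast, Complex.real_smul, mul_left_comm _ (_ : ℂ),
      re_ofReal_mul]
  · congr 2 <;> ring
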